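/- Let k be a field and let m, ℓ be positive integers. Then every persistence module over the poset C_{m,ℓ} is interval-decomposable; equivalently, every indecomposable persistence module over C_{m,ℓ} is isomorphic to an interval module. -/

import Mathlib

open CategoryTheory CategoryTheory.Limits

attribute [local instance] CategoryTheory.Limits.HasFiniteBiproducts.of_hasFiniteProducts

section Posets

variable {P : Type} [PartialOrder P]

/-- Zigzag connectivity of two elements of a subset `S` of a poset: they are linked by a
zigzag of comparable pairs inside `S`. -/
def ZigzagConnIn (S : Set P) (a b : S) : Prop :=
  Relation.ReflTransGen (fun u v : S => (u : P) ≤ v ∨ (v : P) ≤ u) a b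

/-- A subset of a poset is convex if `x ≤ z ≤ y` with `x, y` in the subset implies `z` is. -/
def IsConvex (S : Set P) : Prop :=
  ∀ ⦃x y z : P⦄, x ∈ S → y ∈ S → x ≤ z → z ≤ y → z ∈ S

/-- An interval of a poset: a nonempty, convex, zigzag-connected subset. -/
def IsIntervalSet (S : Set P) : Prop :=
  S.Nonempty ∧ IsConvex S ∧ ∀ a b : S, ZigzagConnIn S a b

end Posets

section IntervalModules

variable (k : Type) [Field k] {P : Type} [PartialOrder P]

open Classical in
/-- The linear map between the fibers of the interval module. -/
noncomputable def intervalModuleAux (S : Set P) (p q : P) :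
    ↥(if p ∈ S then (⊤ : Submodule k k) else ⊥) →ₗ[k]
      ↥(if q ∈ S then (⊤ : Submodule k k) else ⊥) where
  toFun x := ⟨(if p ∈ S ∧ q ∈ S then (1 : k) else 0) * x.1, by
    by_cases hq : q ∈ S
    · rw [if_pos hq]; exact Submodule.mem_top
    · have hp : ¬ (p ∈ S ∧ q ∈ S) := fun h => hq h.2
      rw [if_neg hq, if_neg hp, zero_mul]; exact Submodule.zero_mem _⟩
  map_add' x y := by ext; simp [mul_add]
  map_smul' c x := by ext; simp

open Classical in
/-- The interval module `k_S` associated to a convex subset `S` of a poset `P`: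
it is `k` at points of `S`, `0` elsewhere, with identity structure maps inside `S`. -/
noncomputable def intervalModule (S : Set P) (hS : IsConvex S) : P ⥤ ModuleCat.{0} k where
  obj p := ModuleCat.of k ↥(if p ∈ S then (⊤ : Submodule k k) else ⊥)
  map {p q} _ := ModuleCat.ofHom (intervalModuleAux k S p q)
  map_id p := by
    apply ModuleCat.hom_ext
    apply LinearMap.ext
    rintro ⟨x, hx⟩
    apply Subtype.ext
    show (if p ∈ S ∧ p ∈ S then (1 : k) else 0) * x = x
    by_cases hp : p ∈ S
    · simp [hp]
    · rw [if_neg hp] at hx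
      simp [hp, (Submodule.mem_bot k).mp hx]
  map_comp {p q r} f g := by
    apply ModuleCat.hom_ext
    apply LinearMap.ext
    rintro ⟨x, hx⟩
    apply Subtype.ext
    show (if p ∈ S ∧ r ∈ S then (1 : k) else 0) * x
      = (if q ∈ S ∧ r ∈ S then (1 : k) else 0) * ((if p ∈ S ∧ q ∈ S then (1 : k) else 0) * x)
    by_cases hp : p ∈ S
    · by_cases hr : r ∈ S
      · have hq : q ∈ S := hS hp hr (leOfHom f) (leOfHom g)
        simp [hp, hq, hr]
      · simp [hr]
    · rw [if_neg hp] at hx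
      simp [(Submodule.mem_bot k).mp hx]

/-- A persistence module is an interval module if it is isomorphic to `k_S` for some
interval `S`. -/
def IsIntervalModule (M : P ⥤ ModuleCat.{0} k) : Prop :=
  ∃ (S : Set P) (hS : IsIntervalSet S), Nonempty (M ≅ intervalModule k S hS.2.1)

/-- A persistence module is interval-decomposable if it is isomorphic to a finite direct sum
of interval modules. -/
def IsIntervalDecomposable (M : P ⥤ ModuleCat.{0} k) : Prop :=
  ∃ (n : ℕ) (J : Fin n → (P ⥤ ModuleCat.{0} k)),
    (∀ i, IsIntervalModule k (J i)) ∧ Nonempty (M ≅ ⨁ J)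

/-- The support of a persistence module. -/
def moduleSupport (M : P ⥤ ModuleCat.{0} k) : Set P := {p : P | ¬ IsZero (M.obj p)}

/-- A persistence module valued in finite-dimensional vector spaces. -/
def PointwiseFinite (M : P ⥤ ModuleCat.{0} k) : Prop :=
  ∀ p : P, FiniteDimensional k (M.obj p)

end IntervalModules

section Approximations

variable {C : Type*} [Category C]

/-- `f : X ⟶ M` is a right `𝒳`-approximation of `M` if `X ∈ 𝒳` and every morphism
from an object of `𝒳` to `M` factors through `f`. -/
def IsRightApproximation (𝒳 : C → Prop) {X M : C} (f : X ⟶ M) : Prop :=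
  𝒳 X ∧ ∀ ⦃Y : C⦄ (g : Y ⟶ M), 𝒳 Y → ∃ h : Y ⟶ X, h ≫ f = g

/-- `f : X ⟶ M` is right minimal if every endomorphism `g` of `X` with `f ∘ g = f`
is an isomorphism. -/
def IsRightMinimal {X M : C} (f : X ⟶ M) : Prop :=
  ∀ g : X ⟶ X, g ≫ f = f → IsIso g

end Approximations

/-- An interval cover: a right minimal approximation by interval-decomposable modules. -/
def IsIntervalCover (k : Type) [Field k] {P : Type} [PartialOrder P]
    {X M : P ⥤ ModuleCat.{0} k} (f : X ⟶ M) : Prop :=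
  IsRightApproximation (IsIntervalDecomposable k) f ∧ IsRightMinimal f

section Resolutions

variable {C : Type*} [Category C] [Limits.HasZeroMorphisms C]

/-- `M` admits a resolution `0 ⟶ J_n ⟶ ⋯ ⟶ J_1 ⟶ J_0 ⟶ M ⟶ 0` of length `n` by objects
of `𝒳`: an exact sequence in which every `J_i` lies in `𝒳`.  (The data is encoded by an
`ℕ`-indexed complex which vanishes in degrees `> n` and is exact everywhere.) -/
def HasResolutionOfLength (𝒳 : C → Prop) (n : ℕ) (M : C) : Prop :=
  ∃ (J : ℕ → C) (d : ∀ i, J (i + 1) ⟶ J i) (f : J 0 ⟶ M) (w0 : d 0 ≫ f = 0)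
    (w : ∀ i, d (i + 1) ≫ d i = 0),
    (∀ i, i ≤ n → 𝒳 (J i)) ∧ (∀ i, n < i → IsZero (J i)) ∧
    Epi f ∧ (ShortComplex.mk (d 0) f w0).Exact ∧
    ∀ i, (ShortComplex.mk (d (i + 1)) (d i) (w i)).Exact

end Resolutions

section CmlPoset

/-- The underlying set of the poset `C_{m,ℓ}`: a minimum `0̂`, a maximum `1̂`, and two
incomparable chains `a_1 < ⋯ < a_m` and `b_1 < ⋯ < b_ℓ` in between. -/
inductive Cml (m l : ℕ) : Type where
  | bot : Cml m l
  | a : Fin m → Cml m l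
  | b : Fin l → Cml m l
  | top : Cml m l
  deriving DecidableEq

namespace Cml

variable {m l : ℕ}

/-- The order relation of `C_{m,ℓ}`. -/
protected def le : Cml m l → Cml m l → Prop
  | .bot, _ => True
  | .a i, .a j => i ≤ j
  | .a _, .top => True
  | .b i, .b j => i ≤ j
  | .b _, .top => True
  | .top, .top => True
  | _, _ => False

instance : PartialOrder (Cml m l) where
  le := Cml.le
  le_refl x := by cases x <;> simp [Cml.le]
  le_trans x y z hxy hyz := by
    cases x <;> cases y <;> cases z <;> simp_all [Cml.le] <;> omega
  le_antisymm x y hxy hyx := by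
    cases x <;> cases y <;> simp_all [Cml.le] <;> omega

end Cml

end CmlPoset

/-!
A morphism `k_S ⟶ M` amounts to vectors `x_p ∈ M(p)`, supported on `S` and carried to each other
by the structure maps, and a morphism `M ⟶ k_S` to a compatible family of functionals on the
fibres `M(p)`. When the functionals take the value `1` on the vectors, `k_S` splits off as a
direct summand; as this lowers the total dimension, it suffices to find such a summand in every
nonzero module over `C_{m,ℓ}`.

The poset `C_{m,ℓ}` is the union of the two maximal chains `⊥ < a_1 < ⋯ < a_m < ⊤` and
`⊥ < b_1 < ⋯ < b_ℓ < ⊤`. If `M(⊥ ⟶ ⊤) ≠ 0`, a vector surviving to `⊤` spans a copy of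
`k_{C_{m,ℓ}}`. If `M(⊥) ≠ 0` but `M(⊥ ⟶ ⊤) = 0`, take `z ≠ 0` in `M(⊥)` killed at the first
point of the `b`-chain where `M(⊥ ⟶ -)` fails to be injective: its images span `k_S` for the
down-closed interval `S` where `z` survives, and injectivity at the last `b`-point of `S` lets a
functional chosen on the `a`-side be matched on the `b`-side. The case `M(⊤) ≠ 0` is dual, with
functionals on `M(⊤)` and surjectivity. Otherwise `M` lives on the two open chains, and a segment
of one of them splits off.
-/

section Order

theorem IsIntervalSet.of_isLeast {P : Type} [PartialOrder P] {S : Set P} (hS : IsConvex S) {c : P}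
    (hc : IsLeast S c) : IsIntervalSet S :=
  ⟨⟨c, hc.1⟩, hS, fun a b =>
    .head (b := ⟨c, hc.1⟩) (.inr (hc.2 a.2)) (.single (.inl (hc.2 b.2)))⟩

theorem IsIntervalSet.of_isGreatest {P : Type} [PartialOrder P] {S : Set P} (hS : IsConvex S)
    {c : P} (hc : IsGreatest S c) : IsIntervalSet S :=
  ⟨⟨c, hc.1⟩, hS, fun a b =>
    .head (b := ⟨c, hc.1⟩) (.inl (hc.2 a.2)) (.single (.inr (hc.2 b.2)))⟩

variable {α : Type*} [PartialOrder α] {c : Set α} {P : α → Prop} {a b : α}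

theorem IsChain.not_of_maximal (hc : IsChain (· ≤ ·) c) (ha : Maximal (fun x => x ∈ c ∧ P x) a)
    (hb : b ∈ c) (hba : ¬ b ≤ a) : ¬ P b :=
  fun hPb => hba (ha.2 ⟨hb, hPb⟩ ((hc.total ha.1.1 hb).resolve_right hba))

theorem IsChain.not_of_minimal (hc : IsChain (· ≤ ·) c) (ha : Minimal (fun x => x ∈ c ∧ P x) a)
    (hb : b ∈ c) (hab : ¬ a ≤ b) : ¬ P b :=
  fun hPb => hab (ha.2 ⟨hb, hPb⟩ ((hc.total ha.1.1 hb).resolve_left hab))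

end Order

theorem ModuleCat.exists_ne_zero_of_not_isZero {R : Type*} [Ring R] {X : ModuleCat R}
    (h : ¬ IsZero X) : ∃ x : X, x ≠ 0 := by
  rw [ModuleCat.isZero_iff_subsingleton, not_subsingleton_iff_nontrivial] at h
  exact exists_ne 0

noncomputable def biproductFinSuccIso {C : Type*} [Category C] [Preadditive C]
    [HasFiniteBiproducts C] [HasBinaryBiproducts C] {n : ℕ} (f : Fin (n + 1) → C) :
    ⨁ f ≅ f 0 ⊞ ⨁ fun i : Fin n => f i.succ :=
  (biproduct.isLimit f).conePointUniqueUpToIso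
    (extendFanIsLimit f (biproduct.isLimit _) (BinaryBiproduct.isLimit _ _))

section StructureMaps

variable {k : Type} [Field k] {P : Type} [PartialOrder P] (M : P ⥤ ModuleCat.{0} k)

theorem map_homOfLE_comp {p q r : P} (h₁ : p ≤ q) (h₂ : q ≤ r) :
    (M.map (homOfLE h₂)).hom ∘ₗ (M.map (homOfLE h₁)).hom =
      (M.map (homOfLE (h₁.trans h₂))).hom := by
  rw [← homOfLE_comp h₁ h₂, M.map_comp]; rfl

theorem map_homOfLE_map_homOfLE {p q r : P} (h₁ : p ≤ q) (h₂ : q ≤ r) (x : M.obj p) :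
    M.map (homOfLE h₂) (M.map (homOfLE h₁) x) = M.map (homOfLE (h₁.trans h₂)) x :=
  LinearMap.congr_fun (map_homOfLE_comp M h₁ h₂) x

@[simp]
theorem map_homOfLE_refl {p : P} (h : p ≤ p) (x : M.obj p) : M.map (homOfLE h) x = x := by
  rw [show homOfLE h = 𝟙 p from rfl, M.map_id]; rfl

noncomputable def objBiprodEquiv (I N : P ⥤ ModuleCat.{0} k) (p : P) :
    (I ⊞ N).obj p ≃ₗ[k] I.obj p × N.obj p :=
  haveI := preservesBinaryBiproducts_of_preservesBiproducts
    ((evaluation P (ModuleCat.{0} k)).obj p)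
  ((((evaluation P (ModuleCat.{0} k)).obj p).mapBiprod I N) ≪≫
    ModuleCat.biprodIsoProd _ _).toLinearEquiv

end StructureMaps

namespace intervalModule

variable {k : Type} [Field k] {P : Type} [PartialOrder P] {S : Set P} (hS : IsConvex S)

open Classical in
noncomputable def coord (p : P) : (intervalModule k S hS).obj p →ₗ[k] k := Submodule.subtype _

theorem coord_injective (p : P) : Function.Injective (coord (k := k) hS p) :=
  Subtype.val_injective

open Classical in
theorem coord_map {p q : P} (f : p ⟶ q) (c : (intervalModule k S hS).obj p) :
    coord hS q ((intervalModule k S hS).map f c) =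
      if p ∈ S ∧ q ∈ S then coord hS p c else 0 := by
  show (if p ∈ S ∧ q ∈ S then (1 : k) else 0) * coord hS p c = _
  split_ifs <;> simp

theorem coord_eq_zero {p : P} (hp : p ∉ S) (c : (intervalModule k S hS).obj p) :
    coord hS p c = 0 := by
  classical
  have := c.2
  simp only [if_neg hp] at this
  exact (Submodule.mem_bot k).mp this

theorem not_isZero (hS : IsIntervalSet S) : ¬ IsZero (intervalModule k S hS.2.1) := by
  obtain ⟨p, hp⟩ := hS.1
  intro h
  have := ModuleCat.subsingleton_of_isZero (h.obj p)
  classical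
  have h1 : ((⟨1, by simp [hp]⟩ : ↥(if p ∈ S then (⊤ : Submodule k k) else ⊥)) : k) = 0 :=
    congrArg Subtype.val (Subsingleton.elim (α := (intervalModule k S hS.2.1).obj p) _ 0)
  exact one_ne_zero h1

variable {M : P ⥤ ModuleCat.{0} k}

noncomputable def homOfVectors (x : ∀ p, M.obj p) (hx : ∀ p ∉ S, x p = 0)
    (hxM : ∀ ⦃p q⦄ (h : p ≤ q), p ∈ S → M.map (homOfLE h) (x p) = x q) :
    intervalModule k S hS ⟶ M where
  app p := ModuleCat.ofHom (LinearMap.toSpanSingleton k _ (x p) ∘ₗ coord hS p)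
  naturality p q f := by
    ext c
    change coord hS q ((intervalModule k S hS).map f c) • x q = M.map f (coord hS p c • x p)
    rw [coord_map, map_smul]
    by_cases hp : p ∈ S
    · have hfx : M.map f (x p) = x q := hxM (leOfHom f) hp
      split_ifs with h
      · rw [hfx]
      · rw [hfx, hx q (fun hq => h ⟨hp, hq⟩), smul_zero, smul_zero]
    · simp [coord_eq_zero hS hp c]

noncomputable def homOfCovectors (φ : ∀ p, M.obj p →ₗ[k] k) (hφ : ∀ p ∉ S, φ p = 0)
    (hφM : ∀ ⦃p q⦄ (h : p ≤ q), q ∈ S → φ q ∘ₗ (M.map (homOfLE h)).hom = φ p) :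
    M ⟶ intervalModule k S hS where
  app p := ModuleCat.ofHom <| LinearMap.codRestrict _ (φ p) fun z => by
    by_cases hp : p ∈ S
    · rw [if_pos hp]; exact Submodule.mem_top
    · rw [if_neg hp, hφ p hp]; exact Submodule.zero_mem _
  naturality p q f := by
    classical
    ext z
    apply coord_injective hS
    change φ q (M.map f z) = coord hS q ((intervalModule k S hS).map f _)
    rw [coord_map]
    change _ = if p ∈ S ∧ q ∈ S then φ p z else 0
    by_cases hq : q ∈ S
    · have hφz : φ q (M.map f z) = φ p z := LinearMap.congr_fun (hφM (leOfHom f) hq) z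
      split_ifs with h
      · exact hφz
      · rw [hφz, hφ p (fun hp => h ⟨hp, hq⟩)]; rfl
    · simp [hq, hφ q hq]

theorem homOfVectors_comp_homOfCovectors (x : ∀ p, M.obj p) (hx : ∀ p ∉ S, x p = 0)
    (hxM : ∀ ⦃p q⦄ (h : p ≤ q), p ∈ S → M.map (homOfLE h) (x p) = x q)
    (φ : ∀ p, M.obj p →ₗ[k] k) (hφ : ∀ p ∉ S, φ p = 0)
    (hφM : ∀ ⦃p q⦄ (h : p ≤ q), q ∈ S → φ q ∘ₗ (M.map (homOfLE h)).hom = φ p)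
    (hφx : ∀ p ∈ S, φ p (x p) = 1) :
    homOfVectors hS x hx hxM ≫ homOfCovectors hS φ hφ hφM = 𝟙 _ := by
  ext p c
  apply coord_injective hS
  change φ p (coord hS p c • x p) = coord hS p c
  by_cases hp : p ∈ S
  · rw [map_smul, hφx p hp, smul_eq_mul, mul_one]
  · simp [coord_eq_zero hS hp c]

end intervalModule

section Decomposition

variable {k : Type} [Field k] {P : Type} [PartialOrder P]

def HasIntervalSummand (M : P ⥤ ModuleCat.{0} k) : Prop :=
  ∃ (S : Set P) (hS : IsIntervalSet S) (N : P ⥤ ModuleCat.{0} k),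
    Nonempty (M ≅ intervalModule k S hS.2.1 ⊞ N)

theorem HasIntervalSummand.of_comp_eq_id {S : Set P} (hS : IsIntervalSet S)
    {M : P ⥤ ModuleCat.{0} k} (σ : intervalModule k S hS.2.1 ⟶ M)
    (ρ : M ⟶ intervalModule k S hS.2.1) (h : σ ≫ ρ = 𝟙 _) : HasIntervalSummand M :=
  ⟨S, hS, cokernel σ, ⟨(ShortComplex.Splitting.ofExactOfRetraction
    (ShortComplex.mk σ (cokernel.π σ) (cokernel.condition σ))
    (ShortComplex.exact_of_g_is_cokernel _ (cokernelIsCokernel σ)) ρ h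
    (by dsimp; infer_instance)).isoBinaryBiproduct⟩⟩

theorem HasIntervalSummand.isIntervalModule {M : P ⥤ ModuleCat.{0} k}
    (h : HasIntervalSummand M) (hM : Indecomposable M) : IsIntervalModule k M := by
  obtain ⟨S, hS, N, ⟨e⟩⟩ := h
  refine ⟨S, hS, ⟨e ≪≫ (isoBiprodZero ?_).symm⟩⟩
  exact (hM.2 _ _ e).resolve_left (intervalModule.not_isZero hS)

theorem IsIntervalDecomposable.of_isZero {M : P ⥤ ModuleCat.{0} k} (hM : IsZero M) :
    IsIntervalDecomposable k M :=
  ⟨0, Fin.elim0, Fin.rec0, ⟨hM.iso <| (IsZero.iff_id_eq_zero _).mpr <|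
    biproduct.hom_ext _ _ Fin.rec0⟩⟩

theorem IsIntervalDecomposable.of_iso_biprod {S : Set P} (hS : IsIntervalSet S)
    {M N : P ⥤ ModuleCat.{0} k} (e : M ≅ intervalModule k S hS.2.1 ⊞ N)
    (hN : IsIntervalDecomposable k N) : IsIntervalDecomposable k M := by
  obtain ⟨n, J, hJ, ⟨e'⟩⟩ := hN
  exact ⟨n + 1, Fin.cons _ J, Fin.cases ⟨S, hS, ⟨Iso.refl _⟩⟩ hJ,
    ⟨e ≪≫ biprod.mapIso (Iso.refl _) e' ≪≫
      (biproductFinSuccIso (Fin.cons (intervalModule k S hS.2.1) J)).symm⟩⟩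

noncomputable def totalDim [Fintype P] (M : P ⥤ ModuleCat.{0} k) : ℕ :=
  ∑ p, Module.finrank k (M.obj p)

theorem totalDim_lt_of_iso_biprod [Fintype P] {M I N : P ⥤ ModuleCat.{0} k}
    (hM : PointwiseFinite k M) (e : M ≅ I ⊞ N) (hI : ¬ IsZero I) :
    PointwiseFinite k N ∧ totalDim N < totalDim M := by
  let L p : M.obj p ≃ₗ[k] I.obj p × N.obj p :=
    (e.app p).toLinearEquiv ≪≫ₗ objBiprodEquiv I N p
  have hprod p : FiniteDimensional k (I.obj p × N.obj p) := have := hM p; .equiv (L p)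
  have hI' p : FiniteDimensional k (I.obj p) :=
    .of_surjective (LinearMap.fst k (I.obj p) (N.obj p)) LinearMap.fst_surjective
  have hN' p : FiniteDimensional k (N.obj p) :=
    .of_surjective (LinearMap.snd k (I.obj p) (N.obj p)) LinearMap.snd_surjective
  have hdim p : Module.finrank k (M.obj p) =
      Module.finrank k (I.obj p) + Module.finrank k (N.obj p) := by
    rw [(L p).finrank_eq, Module.finrank_prod]
  obtain ⟨p, hp⟩ : ∃ p, ¬ IsZero (I.obj p) := by
    simpa [Functor.isZero_iff] using hI
  have hpos : 0 < Module.finrank k (I.obj p) := by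
    rw [Module.finrank_pos_iff, ← not_subsingleton_iff_nontrivial,
      ← ModuleCat.isZero_iff_subsingleton]
    exact hp
  have hle : Module.finrank k (I.obj p) ≤ ∑ q, Module.finrank k (I.obj q) :=
    Finset.single_le_sum (f := fun q => Module.finrank k (I.obj q)) (fun _ _ => Nat.zero_le _)
      (Finset.mem_univ p)
  refine ⟨hN', ?_⟩
  simp only [totalDim, hdim, Finset.sum_add_distrib]
  omega

theorem isIntervalDecomposable_of_forall_hasIntervalSummand [Finite P]
    (h : ∀ M : P ⥤ ModuleCat.{0} k, ¬ IsZero M → HasIntervalSummand M)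
    (M : P ⥤ ModuleCat.{0} k) (hM : PointwiseFinite k M) : IsIntervalDecomposable k M := by
  have := Fintype.ofFinite P
  induction hd : totalDim M using Nat.strong_induction_on generalizing M with
  | _ n ih =>
  by_cases hz : IsZero M
  · exact .of_isZero hz
  obtain ⟨S, hS, N, ⟨e⟩⟩ := h M hz
  obtain ⟨hN, hlt⟩ := totalDim_lt_of_iso_biprod hM e (intervalModule.not_isZero hS)
  exact .of_iso_biprod hS e (ih _ (hd ▸ hlt) N hN rfl)

end Decomposition

section Criteria

variable {k : Type} [Field k] {P : Type} [PartialOrder P] {M : P ⥤ ModuleCat.{0} k}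

/-- The summand is `k_S` for `S = {p | p₀ ≤ p ∧ (p ≤ q₁ ∨ p ≤ q₂)}`, spanned by the images of `x`
and detected by the pullbacks of `f₁` and `f₂`. -/
theorem hasIntervalSummand_of_source {p₀ q₁ q₂ : P} (h₁ : p₀ ≤ q₁) (h₂ : p₀ ≤ q₂)
    (x : M.obj p₀) (f₁ : M.obj q₁ →ₗ[k] k) (f₂ : M.obj q₂ →ₗ[k] k)
    (hfx : f₁ (M.map (homOfLE h₁) x) = 1)
    (hf : ∀ p (hp₁ : p ≤ q₁) (hp₂ : p ≤ q₂), p₀ ≤ p →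
      f₁ ∘ₗ (M.map (homOfLE hp₁)).hom = f₂ ∘ₗ (M.map (homOfLE hp₂)).hom)
    (hx : ∀ q (hq : p₀ ≤ q), ¬ q ≤ q₁ → ¬ q ≤ q₂ → M.map (homOfLE hq) x = 0)
    (hf₁ : ∀ p (hp : p ≤ q₁), ¬ p₀ ≤ p → f₁ ∘ₗ (M.map (homOfLE hp)).hom = 0)
    (hf₂ : ∀ p (hp : p ≤ q₂), ¬ p₀ ≤ p → f₂ ∘ₗ (M.map (homOfLE hp)).hom = 0) :
    HasIntervalSummand M := by
  classical
  let S : Set P := {p | p₀ ≤ p ∧ (p ≤ q₁ ∨ p ≤ q₂)}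
  have hS : IsIntervalSet S := .of_isLeast
    (fun _ _ _ ha hb hac hcb => ⟨ha.1.trans hac, hb.2.imp hcb.trans hcb.trans⟩)
    ⟨⟨le_rfl, .inl h₁⟩, fun _ hp => hp.1⟩
  let y p : M.obj p := if h : p₀ ≤ p then M.map (homOfLE h) x else 0
  let φ p : M.obj p →ₗ[k] k :=
    if h : p ≤ q₁ then f₁ ∘ₗ (M.map (homOfLE h)).hom
    else if h : p ≤ q₂ then f₂ ∘ₗ (M.map (homOfLE h)).hom else 0
  have hy p (h : p₀ ≤ p) : y p = M.map (homOfLE h) x := dif_pos h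
  have hφ₁ p (h : p ≤ q₁) : φ p = f₁ ∘ₗ (M.map (homOfLE h)).hom := dif_pos h
  have hφ₂ p (h : p ≤ q₂) : φ p = f₂ ∘ₗ (M.map (homOfLE h)).hom := by
    by_cases h' : p ≤ q₁
    · by_cases hp : p₀ ≤ p
      · rw [hφ₁ p h', hf p h' h hp]
      · rw [hφ₁ p h', hf₁ p h' hp, hf₂ p h hp]
    · exact (dif_neg h').trans (dif_pos h)
  refine .of_comp_eq_id hS _ _
    (intervalModule.homOfVectors_comp_homOfCovectors hS.2.1 y ?_ ?_ φ ?_ ?_ ?_)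
  · intro p hp
    by_cases h : p₀ ≤ p
    · rw [hy p h]
      exact hx p h (fun h' => hp ⟨h, .inl h'⟩) (fun h' => hp ⟨h, .inr h'⟩)
    · exact dif_neg h
  · intro p q h hp
    rw [hy p hp.1, hy q (hp.1.trans h), map_homOfLE_map_homOfLE]
  · intro p hp
    by_cases h₁ : p ≤ q₁
    · rw [hφ₁ p h₁]; exact hf₁ p h₁ (fun h => hp ⟨h, .inl h₁⟩)
    · by_cases h₂ : p ≤ q₂
      · rw [hφ₂ p h₂]; exact hf₂ p h₂ (fun h => hp ⟨h, .inr h₂⟩)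
      · exact (dif_neg h₁).trans (dif_neg h₂)
  · intro p q h hq
    rcases hq.2 with hq | hq
    · rw [hφ₁ q hq, hφ₁ p (h.trans hq), LinearMap.comp_assoc, map_homOfLE_comp]
    · rw [hφ₂ q hq, hφ₂ p (h.trans hq), LinearMap.comp_assoc, map_homOfLE_comp]
  · rintro p ⟨hp, hp₁ | hp₂⟩
    · rw [hφ₁ p hp₁, hy p hp, LinearMap.comp_apply, map_homOfLE_map_homOfLE]
      exact hfx
    · rw [hφ₂ p hp₂, hy p hp, LinearMap.comp_apply, map_homOfLE_map_homOfLE,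
        ← LinearMap.comp_apply, ← hf p₀ h₁ h₂ le_rfl]
      exact hfx

/-- The summand is `k_S` for `S = {p | p ≤ q₀ ∧ (p₁ ≤ p ∨ p₂ ≤ p)}`, spanned by the images of `x₁`
and `x₂` and detected by the pullbacks of `f`. -/
theorem hasIntervalSummand_of_sink {p₁ p₂ q₀ : P} (h₁ : p₁ ≤ q₀) (h₂ : p₂ ≤ q₀)
    (x₁ : M.obj p₁) (x₂ : M.obj p₂) (f : M.obj q₀ →ₗ[k] k)
    (hfx : f (M.map (homOfLE h₁) x₁) = 1)
    (hx : ∀ q (hq₁ : p₁ ≤ q) (hq₂ : p₂ ≤ q), q ≤ q₀ →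
      M.map (homOfLE hq₁) x₁ = M.map (homOfLE hq₂) x₂)
    (hf : ∀ p (hp : p ≤ q₀), ¬ p₁ ≤ p → ¬ p₂ ≤ p → f ∘ₗ (M.map (homOfLE hp)).hom = 0)
    (hx₁ : ∀ q (hq : p₁ ≤ q), ¬ q ≤ q₀ → M.map (homOfLE hq) x₁ = 0)
    (hx₂ : ∀ q (hq : p₂ ≤ q), ¬ q ≤ q₀ → M.map (homOfLE hq) x₂ = 0) :
    HasIntervalSummand M := by
  classical
  let S : Set P := {p | p ≤ q₀ ∧ (p₁ ≤ p ∨ p₂ ≤ p)}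
  have hS : IsIntervalSet S := .of_isGreatest
    (fun _ _ _ ha hb hac hcb => ⟨hcb.trans hb.1, ha.2.imp (·.trans hac) (·.trans hac)⟩)
    ⟨⟨le_rfl, .inl h₁⟩, fun _ hp => hp.1⟩
  let y p : M.obj p :=
    if h : p₁ ≤ p then M.map (homOfLE h) x₁
    else if h : p₂ ≤ p then M.map (homOfLE h) x₂ else 0
  let φ p : M.obj p →ₗ[k] k := if h : p ≤ q₀ then f ∘ₗ (M.map (homOfLE h)).hom else 0
  have hy₁ p (h : p₁ ≤ p) : y p = M.map (homOfLE h) x₁ := dif_pos h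
  have hy₂ p (h : p₂ ≤ p) : y p = M.map (homOfLE h) x₂ := by
    by_cases h' : p₁ ≤ p
    · by_cases hp : p ≤ q₀
      · rw [hy₁ p h', hx p h' h hp]
      · rw [hy₁ p h', hx₁ p h' hp, hx₂ p h hp]
    · exact (dif_neg h').trans (dif_pos h)
  have hφ p (h : p ≤ q₀) : φ p = f ∘ₗ (M.map (homOfLE h)).hom := dif_pos h
  refine .of_comp_eq_id hS _ _
    (intervalModule.homOfVectors_comp_homOfCovectors hS.2.1 y ?_ ?_ φ ?_ ?_ ?_)
  · intro p hp
    by_cases h₁ : p₁ ≤ p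
    · rw [hy₁ p h₁]; exact hx₁ p h₁ (fun h => hp ⟨h, .inl h₁⟩)
    · by_cases h₂ : p₂ ≤ p
      · rw [hy₂ p h₂]; exact hx₂ p h₂ (fun h => hp ⟨h, .inr h₂⟩)
      · exact (dif_neg h₁).trans (dif_neg h₂)
  · rintro p q h ⟨hp, hp₁ | hp₂⟩
    · rw [hy₁ p hp₁, hy₁ q (hp₁.trans h), map_homOfLE_map_homOfLE]
    · rw [hy₂ p hp₂, hy₂ q (hp₂.trans h), map_homOfLE_map_homOfLE]
  · intro p hp
    by_cases h : p ≤ q₀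
    · rw [hφ p h]
      exact hf p h (fun h' => hp ⟨h, .inl h'⟩) (fun h' => hp ⟨h, .inr h'⟩)
    · exact dif_neg h
  · intro p q h hq
    rw [hφ q hq.1, hφ p (h.trans hq.1), LinearMap.comp_assoc, map_homOfLE_comp]
  · rintro p ⟨hp, hp₁ | hp₂⟩
    · rw [hφ p hp, hy₁ p hp₁, LinearMap.comp_apply, map_homOfLE_map_homOfLE]
      exact hfx
    · rw [hφ p hp, hy₂ p hp₂, LinearMap.comp_apply, map_homOfLE_map_homOfLE,
        ← hx q₀ h₁ h₂ le_rfl]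
      exact hfx

theorem hasIntervalSummand_of_map_bot_top_ne_zero [BoundedOrder P] {x : M.obj ⊥}
    (hx : M.map (homOfLE (bot_le : ⊥ ≤ ⊤)) x ≠ 0) : HasIntervalSummand M := by
  obtain ⟨f, hf⟩ := Module.Projective.exists_dual_eq_one k hx
  exact hasIntervalSummand_of_source bot_le bot_le x f f hf (fun _ _ _ _ => rfl)
    (fun _ _ h => absurd le_top h) (fun _ _ h => absurd bot_le h) (fun _ _ h => absurd bot_le h)

end Criteria

namespace Cml

variable {m l : ℕ}

instance : Fintype (Cml m l) where
  elems := {.bot, .top} ∪ Finset.univ.image .a ∪ Finset.univ.image .b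
  complete p := by cases p <;> simp

instance : BoundedOrder (Cml m l) where
  bot := .bot
  bot_le p := by cases p <;> trivial
  top := .top
  le_top p := by cases p <;> trivial

theorem le_def {p q : Cml m l} : p ≤ q ↔ Cml.le p q := Iff.rfl

theorem bot_eq : (⊥ : Cml m l) = .bot := rfl

theorem top_eq : (⊤ : Cml m l) = .top := rfl

def aChain : Set (Cml m l) := {p | ∀ j, p ≠ .b j}

def bChain : Set (Cml m l) := {p | ∀ i, p ≠ .a i}

theorem bot_mem_aChain : (⊥ : Cml m l) ∈ aChain := by rintro _ ⟨⟩

theorem top_mem_aChain : (⊤ : Cml m l) ∈ aChain := by rintro _ ⟨⟩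

theorem bot_mem_bChain : (⊥ : Cml m l) ∈ bChain := by rintro _ ⟨⟩

theorem top_mem_bChain : (⊤ : Cml m l) ∈ bChain := by rintro _ ⟨⟩

theorem mem_aChain_or_mem_bChain (p : Cml m l) : p ∈ aChain ∨ p ∈ bChain := by
  cases p <;> simp [aChain, bChain]

theorem isChain_aChain : IsChain (· ≤ ·) (aChain : Set (Cml m l)) := by
  rintro (_ | i | j | _) hp (_ | i' | j' | _) hq - <;>
    simp_all [aChain, le_def, Cml.le, le_total]

theorem isChain_bChain : IsChain (· ≤ ·) (bChain : Set (Cml m l)) := by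
  rintro (_ | i | j | _) hp (_ | i' | j' | _) hq - <;>
    simp_all [bChain, le_def, Cml.le, le_total]

theorem isChain_Iic {q : Cml m l} (hq : q ≠ ⊤) : IsChain (· ≤ ·) (Set.Iic q) := by
  rintro (_ | i | j | _) hp (_ | i' | j' | _) hp' - <;> rcases q with _ | i₁ | j₁ | _ <;>
    simp_all [le_def, Cml.le, top_eq, le_total]

theorem isChain_Ici {p : Cml m l} (hp : p ≠ ⊥) : IsChain (· ≤ ·) (Set.Ici p) := by
  rintro (_ | i | j | _) hq (_ | i' | j' | _) hq' - <;> rcases p with _ | i₁ | j₁ | _ <;>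
    simp_all [le_def, Cml.le, bot_eq, le_total]

theorem eq_bot_of_le_of_le {p q₁ q₂ : Cml m l} (hq₁ : q₁ ∈ aChain) (hq₂ : q₂ ∈ bChain)
    (h₁ : q₁ ≠ ⊤) (h₂ : q₂ ≠ ⊤) (hp₁ : p ≤ q₁) (hp₂ : p ≤ q₂) : p = ⊥ := by
  rcases p with _ | i | j | _ <;> rcases q₁ with _ | i₁ | j₁ | _ <;>
    rcases q₂ with _ | i₂ | j₂ | _ <;>
    simp_all [aChain, bChain, le_def, Cml.le, bot_eq, top_eq]

theorem eq_top_of_le_of_le {p₁ p₂ q : Cml m l} (hp₁ : p₁ ∈ aChain) (hp₂ : p₂ ∈ bChain)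
    (h₁ : p₁ ≠ ⊥) (h₂ : p₂ ≠ ⊥) (hq₁ : p₁ ≤ q) (hq₂ : p₂ ≤ q) : q = ⊤ := by
  rcases q with _ | i | j | _ <;> rcases p₁ with _ | i₁ | j₁ | _ <;>
    rcases p₂ with _ | i₂ | j₂ | _ <;>
    simp_all [aChain, bChain, le_def, Cml.le, bot_eq, top_eq]

variable {k : Type} [Field k] {M : Cml m l ⥤ ModuleCat.{0} k}

theorem hasIntervalSummand_of_bot_ne_zero
    (hM : ∀ x : M.obj ⊥, M.map (homOfLE (bot_le : ⊥ ≤ ⊤)) x = 0) (hbot : ¬ IsZero (M.obj ⊥)) :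
    HasIntervalSummand M := by
  obtain ⟨q', hq'⟩ : ∃ q', Minimal (fun q => q ∈ bChain ∧
      ¬ Function.Injective (M.map (homOfLE (bot_le : ⊥ ≤ q)))) q' := by
    refine (Set.toFinite _).exists_minimal ⟨⊤, top_mem_bChain, fun hinj => hbot ?_⟩
    rw [ModuleCat.isZero_iff_subsingleton]
    exact ⟨fun x y => hinj ((hM x).trans (hM y).symm)⟩
  obtain ⟨z, hz, hz0⟩ : ∃ z, M.map (homOfLE (bot_le : ⊥ ≤ q')) z = 0 ∧ z ≠ 0 := by
    by_contra! h
    exact hq'.1.2 ((injective_iff_map_eq_zero _).mpr h)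
  obtain ⟨q₁, hq₁⟩ : ∃ q₁, Maximal (fun q => q ∈ aChain ∧
      M.map (homOfLE (bot_le : ⊥ ≤ q)) z ≠ 0) q₁ :=
    (Set.toFinite _).exists_maximal ⟨⊥, bot_mem_aChain, by simpa using hz0⟩
  obtain ⟨q₂, hq₂⟩ : ∃ q₂, Maximal (fun q => q ∈ bChain ∧
      M.map (homOfLE (bot_le : ⊥ ≤ q)) z ≠ 0) q₂ :=
    (Set.toFinite _).exists_maximal ⟨⊥, bot_mem_bChain, by simpa using hz0⟩
  have hq'q₂ : ¬ q' ≤ q₂ := fun h => hq₂.1.2 <| by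
    rw [← map_homOfLE_map_homOfLE M (bot_le : ⊥ ≤ q') h, hz, map_zero]
  have hinj : Function.Injective (M.map (homOfLE (bot_le : ⊥ ≤ q₂))) :=
    not_not.mp (isChain_bChain.not_of_minimal hq' hq₂.1.1 hq'q₂)
  obtain ⟨f₁, hf₁⟩ := Module.Projective.exists_dual_eq_one k hq₁.1.2
  obtain ⟨g, hg⟩ := (M.map (homOfLE (bot_le : ⊥ ≤ q₂))).hom.exists_leftInverse_of_injective
    (LinearMap.ker_eq_bot.mpr hinj)
  have hq₁ne : q₁ ≠ ⊤ := by rintro rfl; exact hq₁.1.2 (hM z)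
  have hq₂ne : q₂ ≠ ⊤ := by rintro rfl; exact hq₂.1.2 (hM z)
  refine hasIntervalSummand_of_source bot_le bot_le z f₁
    (f₁ ∘ₗ (M.map (homOfLE bot_le)).hom ∘ₗ g) hf₁ ?_ ?_ (fun _ _ h => absurd bot_le h)
    (fun _ _ h => absurd bot_le h)
  · intro p hp₁ hp₂ _
    obtain rfl := eq_bot_of_le_of_le hq₁.1.1 hq₂.1.1 hq₁ne hq₂ne hp₁ hp₂
    rw [LinearMap.comp_assoc, LinearMap.comp_assoc, hg, LinearMap.comp_id]
  · intro q _ h₁ h₂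
    rcases mem_aChain_or_mem_bChain q with hq | hq
    · exact not_not.mp (isChain_aChain.not_of_maximal hq₁ hq h₁)
    · exact not_not.mp (isChain_bChain.not_of_maximal hq₂ hq h₂)

theorem hasIntervalSummand_of_top_ne_zero
    (hM : ∀ x : M.obj ⊥, M.map (homOfLE (bot_le : ⊥ ≤ ⊤)) x = 0) (htop : ¬ IsZero (M.obj ⊤)) :
    HasIntervalSummand M := by
  obtain ⟨p', hp'⟩ : ∃ p', Maximal (fun p => p ∈ bChain ∧
      ¬ Function.Surjective (M.map (homOfLE (le_top : p ≤ ⊤)))) p' := by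
    refine (Set.toFinite _).exists_maximal ⟨⊥, bot_mem_bChain, fun hsurj => htop ?_⟩
    rw [ModuleCat.isZero_iff_subsingleton]
    refine ⟨fun x y => ?_⟩
    obtain ⟨x', rfl⟩ := hsurj x
    obtain ⟨y', rfl⟩ := hsurj y
    rw [hM x', hM y']
  obtain ⟨w, hw⟩ : ∃ w, w ∉ LinearMap.range (M.map (homOfLE (le_top : p' ≤ ⊤))).hom := by
    simpa [Function.Surjective] using hp'.1.2
  obtain ⟨g, hgw, hg⟩ := Submodule.exists_dual_map_eq_bot_of_notMem hw inferInstance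
  have hg0 : g ∘ₗ (M.map (homOfLE (le_top : p' ≤ ⊤))).hom = 0 := by
    rw [← LinearMap.range_eq_bot, LinearMap.range_comp, hg]
  have hgtop : g ∘ₗ (M.map (homOfLE (le_top : (⊤ : Cml m l) ≤ ⊤))).hom ≠ 0 := fun h =>
    hgw (by simpa using LinearMap.congr_fun h w)
  obtain ⟨p₁, hp₁⟩ : ∃ p₁, Minimal (fun p => p ∈ aChain ∧
      g ∘ₗ (M.map (homOfLE (le_top : p ≤ ⊤))).hom ≠ 0) p₁ :=
    (Set.toFinite _).exists_minimal ⟨⊤, top_mem_aChain, hgtop⟩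
  obtain ⟨p₂, hp₂⟩ : ∃ p₂, Minimal (fun p => p ∈ bChain ∧
      g ∘ₗ (M.map (homOfLE (le_top : p ≤ ⊤))).hom ≠ 0) p₂ :=
    (Set.toFinite _).exists_minimal ⟨⊤, top_mem_bChain, hgtop⟩
  have hp₂p' : ¬ p₂ ≤ p' := fun h => hp₂.1.2 <| by
    rw [← map_homOfLE_comp M h (le_top : p' ≤ ⊤), ← LinearMap.comp_assoc, hg0,
      LinearMap.zero_comp]
  have hsurj : Function.Surjective (M.map (homOfLE (le_top : p₂ ≤ ⊤))) :=
    not_not.mp (isChain_bChain.not_of_maximal hp' hp₂.1.1 hp₂p')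
  obtain ⟨x₁, hx₁⟩ := LinearMap.surjective hp₁.1.2 1
  obtain ⟨x₂, hx₂⟩ := hsurj (M.map (homOfLE le_top) x₁)
  have hp₁ne : p₁ ≠ ⊥ := by
    rintro rfl
    exact hp₁.1.2 (LinearMap.ext fun x => by simp [hM x])
  have hp₂ne : p₂ ≠ ⊥ := by
    rintro rfl
    exact hp₂.1.2 (LinearMap.ext fun x => by simp [hM x])
  refine hasIntervalSummand_of_sink le_top le_top x₁ x₂ g hx₁ ?_ ?_
    (fun _ _ h => absurd le_top h) (fun _ _ h => absurd le_top h)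
  · intro q hq₁ hq₂ _
    obtain rfl := eq_top_of_le_of_le hp₁.1.1 hp₂.1.1 hp₁ne hp₂ne hq₁ hq₂
    exact hx₂.symm
  · intro p _ h₁ h₂
    rcases mem_aChain_or_mem_bChain p with hp | hp
    · exact not_not.mp (isChain_aChain.not_of_minimal hp₁ hp h₁)
    · exact not_not.mp (isChain_bChain.not_of_minimal hp₂ hp h₂)

theorem hasIntervalSummand_of_isZero_bot_of_isZero_top (hbot : IsZero (M.obj ⊥))
    (htop : IsZero (M.obj ⊤)) (hM : ¬ IsZero M) : HasIntervalSummand M := by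
  obtain ⟨p₀, hp₀⟩ : ∃ p₀, Minimal (· ∈ moduleSupport k M) p₀ :=
    (Set.toFinite _).exists_minimal <| by
      simpa [moduleSupport, Functor.isZero_iff, Set.Nonempty] using hM
  obtain ⟨x, hx⟩ := ModuleCat.exists_ne_zero_of_not_isZero hp₀.1
  obtain ⟨q, hq⟩ : ∃ q, Maximal (fun q => ∃ h : p₀ ≤ q, M.map (homOfLE h) x ≠ 0) q :=
    (Set.toFinite _).exists_maximal ⟨p₀, le_rfl, by simpa using hx⟩
  obtain ⟨hp₀q, hxq⟩ := hq.1
  obtain ⟨f, hf⟩ := Module.Projective.exists_dual_eq_one k hxq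
  have hp₀ne : p₀ ≠ ⊥ := by rintro rfl; exact hp₀.1 hbot
  have hqne : q ≠ ⊤ := by
    rintro rfl
    exact hxq (ModuleCat.subsingleton_of_isZero htop |>.elim _ _)
  have hf₀ p (hp : p ≤ q) (hp₀p : ¬ p₀ ≤ p) : f ∘ₗ (M.map (homOfLE hp)).hom = 0 := by
    have hpp₀ : p ≤ p₀ := ((isChain_Iic hqne).total hp hp₀q).resolve_right hp₀p
    have : Subsingleton (M.obj p) := ModuleCat.subsingleton_of_isZero <|
      not_not.mp fun hp' => hp₀p (hp₀.2 hp' hpp₀)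
    exact LinearMap.ext fun z => by simp [Subsingleton.elim z 0]
  refine hasIntervalSummand_of_source hp₀q hp₀q x f f hf (fun _ _ _ _ => rfl) ?_ hf₀ hf₀
  intro q' hq' hq'q _
  have hqq' : q ≤ q' := ((isChain_Ici hp₀ne).total hp₀q hq').resolve_right hq'q
  by_contra hne
  exact hq'q (hq.2 ⟨hq', hne⟩ hqq')

theorem hasIntervalSummand (M : Cml m l ⥤ ModuleCat.{0} k) (hM : ¬ IsZero M) :
    HasIntervalSummand M := by
  by_cases h : ∀ x : M.obj ⊥, M.map (homOfLE (bot_le : ⊥ ≤ ⊤)) x = 0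
  · by_cases hbot : IsZero (M.obj ⊥)
    · by_cases htop : IsZero (M.obj ⊤)
      · exact hasIntervalSummand_of_isZero_bot_of_isZero_top hbot htop hM
      · exact hasIntervalSummand_of_top_ne_zero h htop
    · exact hasIntervalSummand_of_bot_ne_zero h hbot
  · obtain ⟨x, hx⟩ := not_forall.mp h
    exact hasIntervalSummand_of_map_bot_top_ne_zero hx

end Cml

theorem cml_intervalDecomposable_general
    (k : Type) [Field k] (m l : ℕ) :
    (∀ M : Cml m l ⥤ ModuleCat.{0} k, PointwiseFinite k M → IsIntervalDecomposable k M) ∧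
    (∀ M : Cml m l ⥤ ModuleCat.{0} k, PointwiseFinite k M → Indecomposable M →
      IsIntervalModule k M) :=
  ⟨isIntervalDecomposable_of_forall_hasIntervalSummand Cml.hasIntervalSummand,
    fun M _ hM => (Cml.hasIntervalSummand M hM.1).isIntervalModule hM⟩

/-- Every persistence module over the poset `C_{m,ℓ}` (`m, ℓ > 0`) is
interval-decomposable; equivalently, every indecomposable persistence module over `C_{m,ℓ}`
is an interval module. -/
theorem cml_intervalDecomposable
    (k : Type) [Field k] (m l : ℕ) (hm : 0 < m) (hl : 0 < l) :
    (∀ M : Cml m l ⥤ ModuleCat.{0} k, PointwiseFinite k M → IsIntervalDecomposable k M) ∧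
    (∀ M : Cml m l ⥤ ModuleCat.{0} k, PointwiseFinite k M → Indecomposable M →
      IsIntervalModule k M) :=
  cml_intervalDecomposable_general k m l
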